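/- Let θ be an irrational number and (n_k)_{k≥1} a sequence of positive integers with n_k ≥ 2^k and 0 < n_kθ − ⌊n_kθ⌋ ≤ 2^{−n_k} for every k ≥ 1. Define f, g : ℝ → ℝ by f(t) = Σ_{k≥1} (2/k²)·Re[(1 − e^{2πi n_k θ})·e^{2πi n_k t}] and g(t) = Σ_{k≥1} (2/k²)·cos(2π n_k t). Then both series converge uniformly, f and g are 1-periodic, f is C^∞ on ℝ with ∫₀¹ f(t) dt = 0, g是 continuous but g is not continuously differentiable, and g(t) − g(t + θ) = f(t) for all t ∈ ℝ. -/

import Mathlib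

open Filter

/-- The `k`-th term (for `k ≥ 1`) of the series defining Furstenberg's smooth function `f`:
`(2/k²)·Re[(1 − e^{2πi n_k θ})·e^{2πi n_k t}]`. -/
noncomputable def furstTermF (θ : ℝ) (n : ℕ → ℕ) (k : ℕ) (t : ℝ) : ℝ :=
  (2 / (k : ℝ) ^ 2) *
    (((1 : ℂ) - Complex.exp (2 * Real.pi * Complex.I * (n k : ℂ) * (θ : ℂ))) *
      Complex.exp (2 * Real.pi * Complex.I * (n k : ℂ) * (t : ℂ))).re

/-- The `k`-th term (for `k ≥ 1`) of the series defining Furstenberg's continuous function `g`: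
`(2/k²)·cos(2π n_k t)`. -/
noncomputable def furstTermG (n : ℕ → ℕ) (k : ℕ) (t : ℝ) : ℝ :=
  (2 / (k : ℝ) ^ 2) * Real.cos (2 * Real.pi * (n k : ℝ) * t)

open Real in
lemma furstTermF_eq (θ : ℝ) (n : ℕ → ℕ) (k : ℕ) (t : ℝ) :
    furstTermF θ n k t = furstTermG n k t - furstTermG n k (t + θ) := by
  unfold furstTermF furstTermG
  have e1 : (2 * (Real.pi:ℂ) * Complex.I * (n k : ℂ) * (θ : ℂ)) =
      ((2 * Real.pi * (n k : ℝ) * θ : ℝ) : ℂ) * Complex.I := by push_cast; ring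
  have e2 : (2 * (Real.pi:ℂ) * Complex.I * (n k : ℂ) * (t : ℂ)) =
      ((2 * Real.pi * (n k : ℝ) * t : ℝ) : ℂ) * Complex.I := by push_cast; ring
  rw [e1, e2, sub_mul, one_mul, ← Complex.exp_add, Complex.sub_re,
    Complex.exp_ofReal_mul_I_re]
  have e3 : ((2 * Real.pi * (n k : ℝ) * θ : ℝ) : ℂ) * Complex.I +
      ((2 * Real.pi * (n k : ℝ) * t : ℝ) : ℂ) * Complex.I =
      ((2 * Real.pi * (n k : ℝ) * θ + 2 * Real.pi * (n k : ℝ) * t : ℝ) : ℂ) * Complex.I := by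
    push_cast; ring
  rw [e3, Complex.exp_ofReal_mul_I_re]
  have : 2 * Real.pi * (n k : ℝ) * θ + 2 * Real.pi * (n k : ℝ) * t
      = 2 * Real.pi * (n k : ℝ) * (t + θ) := by ring
  rw [this]; ring

lemma iter_cos (c b a1 a2 : ℝ) : ∀ (m : ℕ),
    iteratedDeriv m (fun t => c * (Real.cos (b * t + a1) - Real.cos (b * t + a2))) =
      fun t => c * b ^ m * (Real.cos (b * t + (a1 + m * (Real.pi / 2))) -
        Real.cos (b * t + (a2 + m * (Real.pi / 2))))
  | 0 => by
    funext t; simp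
  | (m+1) => by
    rw [iteratedDeriv_succ, iter_cos c b a1 a2 m]
    funext t
    have h : ∀ a : ℝ, HasDerivAt (fun t => Real.cos (b * t + a))
        (b * Real.cos (b * t + (a + Real.pi / 2))) t := by
      intro a
      have h0 : HasDerivAt (fun t : ℝ => b * t + a) (b * 1) t :=
        ((hasDerivAt_id t).const_mul b).add_const a
      have := h0.cos
      convert this using 1
      rw [show b * t + (a + Real.pi / 2) = (b * t + a) + Real.pi / 2 by ring,
        Real.cos_add_pi_div_two]
      ring
    have H := (((h (a1 + m * (Real.pi / 2))).sub (h (a2 + m * (Real.pi / 2)))).const_mul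
      (c * b ^ m))
    have H2 : HasDerivAt (fun t => c * b ^ m * (Real.cos (b * t + (a1 + m * (Real.pi / 2))) -
        Real.cos (b * t + (a2 + m * (Real.pi / 2))))) _ t := H
    rw [H2.deriv]
    push_cast
    ring_nf

lemma abs_cos_sub_cos' (x y : ℝ) : |Real.cos x - Real.cos y| ≤ |x - y| := by
  rw [Real.cos_sub_cos]
  calc |(-2) * Real.sin ((x+y)/2) * Real.sin ((x-y)/2)|
      = 2 * |Real.sin ((x+y)/2)| * |Real.sin ((x-y)/2)| := by
        rw [abs_mul, abs_mul]; norm_num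
    _ ≤ 2 * 1 * |(x-y)/2| := by
        have h1 := Real.abs_sin_le_one ((x+y)/2)
        have h2 : |Real.sin ((x-y)/2)| ≤ |(x-y)/2| := Real.abs_sin_le_abs
        have h3 : 2 * |Real.sin ((x+y)/2)| ≤ 2 * 1 := by linarith
        exact mul_le_mul h3 h2 (abs_nonneg _) (by norm_num)
    _ = |x - y| := by rw [abs_div, abs_two]; ring

lemma int_cos' (b a : ℝ) (hb : b ≠ 0) :
    ∫ t in (0:ℝ)..1, Real.cos (b*t+a) = (Real.sin (b+a) - Real.sin a)/b := by
  rw [intervalIntegral.integral_comp_mul_add Real.cos hb a]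
  simp [integral_cos]
  ring

lemma sin_two_pi_int (m : ℤ) : Real.sin (2*Real.pi*m) = 0 := by
  have := Real.sin_int_mul_pi (2*m)
  rwa [show ((2*m : ℤ):ℝ) * Real.pi = 2*Real.pi*m by push_cast; ring] at this

lemma int_cos_int (m : ℤ) :
    ∫ t in (0:ℝ)..1, Real.cos (2*Real.pi*m*t) = if m = 0 then 1 else 0 := by
  split_ifs with h
  · simp [h]
  · have hm : (m:ℝ) ≠ 0 := Int.cast_ne_zero.mpr h
    have hb : 2*Real.pi*(m:ℝ) ≠ 0 := by
      have := Real.pi_ne_zero; positivity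
    have h0 := int_cos' (2*Real.pi*m) 0 hb
    simp only [add_zero] at h0
    rw [h0, Real.sin_zero, sin_two_pi_int]
    simp

lemma geom_bound (m : ℕ) : ∃ C : ℝ, 0 ≤ C ∧
    ∀ j : ℕ, (2*Real.pi*j)^m * ((2:ℝ)^j)⁻¹ ≤ C * (3/4)^j := by
  have hsum : Summable (fun j : ℕ => (j:ℝ)^m * (2/3:ℝ)^j) :=
    summable_pow_mul_geometric_of_norm_lt_one m (by rw [Real.norm_eq_abs, abs_of_nonneg (by norm_num : (0:ℝ) ≤ 2/3)]; norm_num)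
  obtain ⟨B, hB⟩ := hsum.tendsto_atTop_zero.bddAbove_range
  have hB' : ∀ j : ℕ, (j:ℝ)^m * (2/3:ℝ)^j ≤ B := fun j => hB (Set.mem_range_self j)
  have hB0 : 0 ≤ B := le_trans (by positivity) (hB' 0)
  refine ⟨(2*Real.pi)^m * B, by positivity, fun j => ?_⟩
  have key : (2*Real.pi*(j:ℝ))^m * ((2:ℝ)^j)⁻¹
      = (2*Real.pi)^m * ((j:ℝ)^m * (2/3:ℝ)^j) * (3/4:ℝ)^j := by
    have h1 : ((2:ℝ)^j)⁻¹ = (2/3:ℝ)^j * (3/4:ℝ)^j := by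
      rw [← mul_pow, ← inv_pow]; norm_num
    rw [h1, mul_pow]; ring
  rw [key]
  have h2 : (2*Real.pi)^m * ((j:ℝ)^m*(2/3:ℝ)^j) ≤ (2*Real.pi)^m * B :=
    mul_le_mul_of_nonneg_left (hB' j) (by positivity)
  exact mul_le_mul_of_nonneg_right h2 (by positivity)

lemma sum_bound (n : ℕ → ℕ) (hg : ∀ k, 1 ≤ k → 2^k ≤ n k) (m : ℕ) :
    Summable (fun k : ℕ => 2 * (2*Real.pi*(n (k+1) : ℝ))^m * (2*Real.pi * ((2:ℝ)^(n (k+1)))⁻¹)) := by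
  obtain ⟨C, hC0, hC⟩ := geom_bound m
  have hsum : Summable (fun k : ℕ => (2*(2*Real.pi)*C) * (3/4:ℝ)^k) :=
    (summable_geometric_of_lt_one (by norm_num) (by norm_num)).mul_left _
  apply Summable.of_nonneg_of_le (fun k => by positivity) (fun k => ?_) hsum
  have hkn : k ≤ n (k+1) := by
    have h1 : k < 2^(k+1) := lt_of_lt_of_le (Nat.lt_two_pow_self (n := k)) (Nat.pow_le_pow_right (by norm_num) (by omega))
    exact le_trans (le_of_lt h1) (hg (k+1) (by omega))
  have h34 : ((3:ℝ)/4)^(n (k+1)) ≤ (3/4:ℝ)^k :=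
    pow_le_pow_of_le_one (by norm_num) (by norm_num) hkn
  calc 2 * (2*Real.pi*(n (k+1) : ℝ))^m * (2*Real.pi * ((2:ℝ)^(n (k+1)))⁻¹)
      = 2*(2*Real.pi) * ((2*Real.pi*(n (k+1) : ℝ))^m * ((2:ℝ)^(n (k+1)))⁻¹) := by ring
    _ ≤ 2*(2*Real.pi) * (C * (3/4)^(n (k+1))) :=
        mul_le_mul_of_nonneg_left (hC _) (by positivity)
    _ ≤ 2*(2*Real.pi) * (C * (3/4)^k) :=
        mul_le_mul_of_nonneg_left (mul_le_mul_of_nonneg_left h34 hC0) (by positivity)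
    _ = (2*(2*Real.pi)*C) * (3/4:ℝ)^k := by ring

lemma termF_fun (θ : ℝ) (n : ℕ → ℕ) (k : ℕ) :
    (fun t => furstTermF θ n k t) =
      fun t => (2/(k:ℝ)^2) * (Real.cos (2*Real.pi*(n k : ℝ)*t + 0)
        - Real.cos (2*Real.pi*(n k : ℝ)*t + 2*Real.pi*(n k : ℝ)*θ)) := by
  funext t
  rw [furstTermF_eq]
  unfold furstTermG
  rw [show 2*Real.pi*(n k : ℝ)*(t+θ) = 2*Real.pi*(n k : ℝ)*t + 2*Real.pi*(n k : ℝ)*θ by ring,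
    add_zero]
  ring

lemma termF_iter_bound (θ : ℝ) (n : ℕ → ℕ) (k m : ℕ) (hk : 1 ≤ k)
    (h2 : Int.fract ((n k : ℝ)*θ) ≤ ((2:ℝ)^(n k))⁻¹) (t : ℝ) :
    ‖iteratedFDeriv ℝ m (fun t => furstTermF θ n k t) t‖ ≤
      2 * (2*Real.pi*(n k : ℝ))^m * (2*Real.pi * ((2:ℝ)^(n k))⁻¹) := by
  rw [norm_iteratedFDeriv_eq_norm_iteratedDeriv, termF_fun, iter_cos]
  set b := 2*Real.pi*(n k : ℝ) with hbdef
  set X := b*t + (0 + (m:ℝ)*(Real.pi/2)) with hX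
  set δ := 2*Real.pi*Int.fract ((n k : ℝ)*θ) with hδ
  have hfloor : ((n k : ℝ)*θ) = (⌊(n k : ℝ)*θ⌋ : ℝ) + Int.fract ((n k : ℝ)*θ) :=
    (Int.floor_add_fract _).symm
  have harg : b*t + (2*Real.pi*(n k : ℝ)*θ + (m:ℝ)*(Real.pi/2)) =
      (X + δ) + (⌊(n k : ℝ)*θ⌋ : ℝ)*(2*Real.pi) := by
    rw [hX, hδ, hbdef]
    linear_combination (2*Real.pi) * hfloor
  beta_reduce
  rw [harg, Real.cos_add_int_mul_two_pi]
  have hb0 : 0 ≤ b := by rw [hbdef]; positivity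
  have hδ0 : 0 ≤ δ := by
    rw [hδ]; have := Int.fract_nonneg ((n k : ℝ)*θ); positivity
  have hd : |Real.cos X - Real.cos (X + δ)| ≤ 2*Real.pi * ((2:ℝ)^(n k))⁻¹ := by
    have h4 : |Real.cos X - Real.cos (X + δ)| ≤ |X - (X + δ)| := abs_cos_sub_cos' _ _
    have h5 : |X - (X + δ)| = δ := by
      have he : X - (X+δ) = -δ := by ring
      rw [he, abs_neg, abs_of_nonneg hδ0]
    have h6 : δ ≤ 2*Real.pi * ((2:ℝ)^(n k))⁻¹ := by
      rw [hδ]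
      exact mul_le_mul_of_nonneg_left h2 (by positivity)
    rw [h5] at h4
    exact h4.trans h6
  have hc : |2/(k:ℝ)^2| ≤ 2 := by
    have hk1 : (1:ℝ) ≤ (k:ℝ)^2 := by
      have : (1:ℝ) ≤ (k:ℝ) := by exact_mod_cast hk
      nlinarith
    rw [abs_of_nonneg (by positivity)]
    rw [div_le_iff₀ (by positivity)]
    nlinarith
  rw [Real.norm_eq_abs, abs_mul, abs_mul, abs_of_nonneg (pow_nonneg hb0 m)]
  exact mul_le_mul (mul_le_mul hc le_rfl (pow_nonneg hb0 m) (by norm_num))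
    hd (abs_nonneg _) (by positivity)

lemma termF_contDiff (θ : ℝ) (n : ℕ → ℕ) (k : ℕ) :
    ContDiff ℝ (⊤ : ℕ∞) (fun t => furstTermF θ n k t) := by
  rw [termF_fun]
  apply ContDiff.mul contDiff_const
  apply ContDiff.sub
  · exact Real.contDiff_cos.comp ((contDiff_const.mul contDiff_id).add contDiff_const)
  · exact Real.contDiff_cos.comp ((contDiff_const.mul contDiff_id).add contDiff_const)

lemma orth (N M : ℕ) (hN : 1 ≤ N) (hM : 1 ≤ M) :
    ∫ t in (0:ℝ)..1, Real.cos (2*Real.pi*(N:ℝ)*t) * Real.cos (2*Real.pi*(M:ℝ)*t)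
      = if N = M then 1/2 else 0 := by
  have key : ∀ t ∈ Set.uIcc (0:ℝ) 1, Real.cos (2*Real.pi*(N:ℝ)*t) * Real.cos (2*Real.pi*(M:ℝ)*t)
      = (Real.cos (2*Real.pi*((N - M : ℤ) : ℝ)*t) + Real.cos (2*Real.pi*((N + M : ℤ) : ℝ)*t))/2 := by
    intro t _
    have h := Real.two_mul_cos_mul_cos (2*Real.pi*(N:ℝ)*t) (2*Real.pi*(M:ℝ)*t)
    have e1 : 2*Real.pi*(N:ℝ)*t - 2*Real.pi*(M:ℝ)*t = 2*Real.pi*((N - M : ℤ) : ℝ)*t := by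
      push_cast; ring
    have e2 : 2*Real.pi*(N:ℝ)*t + 2*Real.pi*(M:ℝ)*t = 2*Real.pi*((N + M : ℤ) : ℝ)*t := by
      push_cast; ring
    rw [e1, e2] at h
    linarith
  rw [intervalIntegral.integral_congr key]
  have hi1 : IntervalIntegrable (fun t => Real.cos (2*Real.pi*((N - M : ℤ) : ℝ)*t)) MeasureTheory.volume 0 1 := by
    apply Continuous.intervalIntegrable; fun_prop
  have hi2 : IntervalIntegrable (fun t => Real.cos (2*Real.pi*((N + M : ℤ) : ℝ)*t)) MeasureTheory.volume 0 1 := by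
    apply Continuous.intervalIntegrable; fun_prop
  rw [intervalIntegral.integral_div, intervalIntegral.integral_add hi1 hi2,
    int_cos_int, int_cos_int]
  split_ifs with h1 h2 h3 <;> try omega
  · norm_num
  · norm_num

lemma absG (n : ℕ → ℕ) (k : ℕ) (t : ℝ) : |furstTermG n k t| ≤ 2/(k:ℝ)^2 := by
  unfold furstTermG
  rw [abs_mul, abs_of_nonneg (show (0:ℝ) ≤ 2/(k:ℝ)^2 by positivity)]
  calc 2/(k:ℝ)^2 * |Real.cos (2*Real.pi*(n k : ℝ)*t)| ≤ 2/(k:ℝ)^2 * 1 :=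
    mul_le_mul_of_nonneg_left (Real.abs_cos_le_one _) (by positivity)
  _ = 2/(k:ℝ)^2 := by ring

lemma absF (θ : ℝ) (n : ℕ → ℕ) (k : ℕ) (t : ℝ) : |furstTermF θ n k t| ≤ 4/(k:ℝ)^2 := by
  rw [furstTermF_eq]
  have h1 := absG n k t
  have h2 := absG n k (t+θ)
  have h3 := abs_sub (furstTermG n k t) (furstTermG n k (t+θ))
  have h4 : 4/(k:ℝ)^2 = 2/(k:ℝ)^2 + 2/(k:ℝ)^2 := by ring
  linarith

lemma summable_inv_sq (c : ℝ) : Summable (fun k : ℕ => c/((k:ℝ)+1)^2) := by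
  have h : Summable (fun n : ℕ => 1/(n:ℝ)^2) :=
    Real.summable_one_div_nat_pow.mpr (by norm_num)
  have h2 := (summable_nat_add_iff 1).mpr h
  exact (h2.mul_left c).congr (fun k => by push_cast; ring)

lemma sin_two_pi_nat (N : ℕ) : Real.sin (2*Real.pi*(N:ℝ)) = 0 := by
  have := sin_two_pi_int (N:ℤ)
  push_cast at this ⊢
  exact this

lemma int_termF (θ : ℝ) (n : ℕ → ℕ) (k : ℕ) (hn : 1 ≤ n k) :
    ∫ t in (0:ℝ)..1, furstTermF θ n k t = 0 := by
  have hb : 2*Real.pi*(n k : ℝ) ≠ 0 := by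
    have h1 : (0:ℝ) < (n k : ℝ) := by exact_mod_cast hn
    have := Real.pi_pos
    positivity
  have hc1 : IntervalIntegrable (fun t => Real.cos (2*Real.pi*(n k : ℝ)*t + 0))
      MeasureTheory.volume 0 1 := by apply Continuous.intervalIntegrable; fun_prop
  have hc2 : IntervalIntegrable
      (fun t => Real.cos (2*Real.pi*(n k : ℝ)*t + 2*Real.pi*(n k : ℝ)*θ))
      MeasureTheory.volume 0 1 := by apply Continuous.intervalIntegrable; fun_prop
  have he : ∀ t : ℝ, furstTermF θ n k t = (2/(k:ℝ)^2) *
      (Real.cos (2*Real.pi*(n k : ℝ)*t + 0)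
        - Real.cos (2*Real.pi*(n k : ℝ)*t + 2*Real.pi*(n k : ℝ)*θ)) :=
    fun t => congrFun (termF_fun θ n k) t
  rw [intervalIntegral.integral_congr (fun t _ => he t),
    intervalIntegral.integral_const_mul,
    intervalIntegral.integral_sub hc1 hc2, int_cos' _ _ hb, int_cos' _ _ hb]
  have hs1 : Real.sin (2*Real.pi*(n k : ℝ) + 0) = Real.sin 0 := by
    rw [add_zero, show 2*Real.pi*(n k : ℝ) = 0 + ((n k : ℤ):ℝ)*(2*Real.pi) by push_cast; ring,
      Real.sin_add_int_mul_two_pi, Real.sin_zero]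
  have hs2 : Real.sin (2*Real.pi*(n k : ℝ) + 2*Real.pi*(n k : ℝ)*θ)
      = Real.sin (2*Real.pi*(n k : ℝ)*θ) := by
    rw [show 2*Real.pi*(n k : ℝ) + 2*Real.pi*(n k : ℝ)*θ
        = 2*Real.pi*(n k : ℝ)*θ + ((n k : ℤ):ℝ)*(2*Real.pi) by push_cast; ring,
      Real.sin_add_int_mul_two_pi]
  rw [hs1, hs2]
  ring

lemma periodG (n : ℕ → ℕ) (k : ℕ) (t : ℝ) : furstTermG n k (t+1) = furstTermG n k t := by
  unfold furstTermG
  rw [show 2*Real.pi*(n k : ℝ)*(t+1) = 2*Real.pi*(n k : ℝ)*t + ((n k : ℤ):ℝ)*(2*Real.pi) by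
    push_cast; ring, Real.cos_add_int_mul_two_pi]

lemma periodF (θ : ℝ) (n : ℕ → ℕ) (k : ℕ) (t : ℝ) :
    furstTermF θ n k (t+1) = furstTermF θ n k t := by
  rw [furstTermF_eq, furstTermF_eq, periodG, show t+1+θ = (t+θ)+1 by ring, periodG]

open MeasureTheory in
lemma swap_int (F : ℕ → ℝ → ℝ) (hc : ∀ j, Continuous (F j))
    (c : ℕ → ℝ) (hb : ∀ j t, ‖F j t‖ ≤ c j) (hs : Summable c) :
    ∑' j, ∫ t in (0:ℝ)..1, F j t = ∫ t in (0:ℝ)..1, ∑' j, F j t := by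
  have hmeas : ∀ j, IntegrableOn (F j) (Set.Ioc (0:ℝ) 1) volume :=
    fun j => (hc j).integrableOn_Ioc
  haveI : IsFiniteMeasure (volume.restrict (Set.Ioc (0:ℝ) 1)) := by
    constructor
    rw [Measure.restrict_apply_univ, Real.volume_Ioc]
    exact ENNReal.ofReal_lt_top
  have hone : (volume.restrict (Set.Ioc (0:ℝ) 1)) Set.univ = ENNReal.ofReal 1 := by
    rw [Measure.restrict_apply_univ, Real.volume_Ioc]; norm_num
  have hnorm : Summable (fun j => ∫ t in Set.Ioc (0:ℝ) 1, ‖F j t‖) := by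
    apply Summable.of_nonneg_of_le
      (fun j => integral_nonneg fun t => norm_nonneg _) (fun j => ?_) hs
    calc ∫ t in Set.Ioc (0:ℝ) 1, ‖F j t‖
        ≤ ∫ _t in Set.Ioc (0:ℝ) 1, c j :=
          integral_mono (hmeas j).norm (integrable_const _) (fun t => hb j t)
      _ = c j := by
          rw [integral_const, smul_eq_mul]
          rw [measureReal_def, hone]
          norm_num
  simp only [intervalIntegral.integral_of_le zero_le_one]
  exact integral_tsum_of_summable_integral_norm hmeas hnorm

noncomputable def cTermF (θ : ℝ) (n : ℕ → ℕ) (k : ℕ) (z : ℂ) : ℂ :=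
  ((2 / (k : ℝ) ^ 2 : ℝ) : ℂ) *
    (((1 : ℂ) - Complex.exp (2 * Real.pi * Complex.I * (n k : ℂ) * (θ : ℂ))) *
      Complex.exp (2 * Real.pi * Complex.I * (n k : ℂ) * z))

lemma termF_re (θ : ℝ) (n : ℕ → ℕ) (k : ℕ) (t : ℝ) :
    furstTermF θ n k t = (cTermF θ n k (t:ℂ)).re := by
  have h : ∀ (r : ℝ) (z : ℂ), ((r:ℂ) * z).re = r * z.re := fun r z => by
    simp [Complex.mul_re]
  unfold furstTermF cTermF
  rw [h]

lemma sqrt_pow' (x : ℝ) (hx : 0 ≤ x) (m : ℕ) : Real.sqrt (x^m) = (Real.sqrt x)^m := by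
  have h : ((Real.sqrt x)^m)^2 = x^m := by
    rw [show ((Real.sqrt x)^m)^2 = ((Real.sqrt x)^2)^m by ring, Real.sq_sqrt hx]
  rw [← h, Real.sqrt_sq (pow_nonneg (Real.sqrt_nonneg x) m)]

lemma ratio_lt_one : Real.sqrt 2⁻¹ * Real.exp (Real.pi/20) < 1 := by
  have hs2 : (0:ℝ) < Real.sqrt 2 := Real.sqrt_pos.mpr (by norm_num)
  have hexp : Real.exp (Real.pi/20) < Real.sqrt 2 := by
    rw [Real.lt_sqrt (le_of_lt (Real.exp_pos _))]
    · have h1 : Real.exp (Real.pi/20)^2 = Real.exp (2*(Real.pi/20)) := by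
        rw [show (2:ℝ)*(Real.pi/20) = (2:ℕ)*(Real.pi/20) by norm_num, Real.exp_nat_mul]
      rw [h1]
      have h2 : 2*(Real.pi/20) ≤ 1/3 := by
        have := Real.pi_lt_d2
        nlinarith
      calc Real.exp (2*(Real.pi/20)) ≤ Real.exp (1/3) := Real.exp_le_exp.mpr h2
        _ < 2 := by
          apply lt_of_pow_lt_pow_left₀ 3 (by norm_num : (0:ℝ) ≤ 2)
          have h3 : Real.exp (1/3)^3 = Real.exp 1 := by
            rw [show Real.exp (1/3)^3 = Real.exp (1/3)^(3:ℕ) by norm_num, ← Real.exp_nat_mul]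
            norm_num
          rw [h3]
          have := Real.exp_one_lt_d9
          norm_num
          linarith
  rw [Real.sqrt_inv]
  rw [inv_mul_lt_iff₀ hs2]
  linarith

lemma cTermF_diff (θ : ℝ) (n : ℕ → ℕ) (k : ℕ) : Differentiable ℂ (cTermF θ n k) := by
  unfold cTermF
  apply Differentiable.const_mul
  apply Differentiable.const_mul
  exact Complex.differentiable_exp.comp (differentiable_id.const_mul _)

lemma cTermF_bound (θ : ℝ) (n : ℕ → ℕ) (k : ℕ) (hk : 1 ≤ k)
    (hfr : Int.fract ((n k : ℝ)*θ) ≤ ((2:ℝ)^(n k))⁻¹)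
    (z : ℂ) (hz : |z.im| ≤ 1/40) :
    ‖cTermF θ n k z‖ ≤
      2 * Real.sqrt (4*Real.pi) * (Real.sqrt 2⁻¹ * Real.exp (Real.pi/20))^(n k) := by
  set m : ℕ := n k with hm
  -- norm of the exponential factor
  have hre : (2 * (Real.pi:ℂ) * Complex.I * (m : ℂ) * z).re = -(2*Real.pi*(m:ℝ)*z.im) := by
    simp [Complex.mul_re, Complex.mul_im]
    try ring
  have hexp : ‖Complex.exp (2 * Real.pi * Complex.I * (m : ℂ) * z)‖
      ≤ Real.exp (Real.pi/20)^m := by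
    rw [Complex.norm_exp, hre]
    rw [← Real.exp_nat_mul]
    apply Real.exp_le_exp.mpr
    have h1 : -z.im ≤ 1/40 := by
      have := abs_le.mp hz
      linarith [this.1]
    have h2 : (0:ℝ) ≤ 2*Real.pi*(m:ℝ) := by positivity
    have h3 : -(2*Real.pi*(m:ℝ)*z.im) = (2*Real.pi*(m:ℝ))*(-z.im) := by ring
    rw [h3]
    calc (2*Real.pi*(m:ℝ))*(-z.im) ≤ (2*Real.pi*(m:ℝ))*(1/40) :=
        mul_le_mul_of_nonneg_left h1 h2
      _ ≤ (m:ℝ)*(Real.pi/20) := by nlinarith [Real.pi_pos]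
  -- norm of the coefficient factor
  have hcoef : ‖(1 : ℂ) - Complex.exp (2 * Real.pi * Complex.I * (m : ℂ) * (θ : ℂ))‖
      ≤ Real.sqrt (4*Real.pi) * (Real.sqrt 2⁻¹)^m := by
    have e1 : (2 * (Real.pi:ℂ) * Complex.I * (m : ℂ) * (θ : ℂ)) =
        ((2 * Real.pi * (m:ℝ) * θ : ℝ) : ℂ) * Complex.I := by push_cast; ring
    rw [e1]
    set φ : ℝ := 2 * Real.pi * (m:ℝ) * θ with hφ
    have hrepart : ((1 : ℂ) - Complex.exp ((φ:ℂ) * Complex.I)).re = 1 - Real.cos φ := by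
      rw [Complex.sub_re, Complex.exp_ofReal_mul_I_re, Complex.one_re]
    have himpart : ((1 : ℂ) - Complex.exp ((φ:ℂ) * Complex.I)).im = -Real.sin φ := by
      rw [Complex.sub_im, Complex.exp_ofReal_mul_I_im, Complex.one_im]
      ring
    have hnormsq : ‖(1 : ℂ) - Complex.exp ((φ:ℂ) * Complex.I)‖^2 = 2 - 2*Real.cos φ := by
      rw [Complex.sq_norm, Complex.normSq_apply, hrepart, himpart]
      nlinarith [Real.sin_sq_add_cos_sq φ]
    have hcosper : Real.cos φ = Real.cos (2*Real.pi*Int.fract ((m:ℝ)*θ)) := by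
      have hfloor : ((m:ℝ)*θ) = (⌊(m:ℝ)*θ⌋ : ℝ) + Int.fract ((m:ℝ)*θ) :=
        (Int.floor_add_fract _).symm
      rw [show φ = 2*Real.pi*Int.fract ((m:ℝ)*θ) + (⌊(m:ℝ)*θ⌋:ℝ)*(2*Real.pi) by
        rw [hφ]; linear_combination (2*Real.pi) * hfloor]
      rw [Real.cos_add_int_mul_two_pi]
    have hfr0 : 0 ≤ Int.fract ((m:ℝ)*θ) := Int.fract_nonneg _
    have hcosb : 1 - Real.cos (2*Real.pi*Int.fract ((m:ℝ)*θ)) ≤ 2*Real.pi*Int.fract ((m:ℝ)*θ) := by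
      have h := abs_cos_sub_cos' 0 (2*Real.pi*Int.fract ((m:ℝ)*θ))
      rw [Real.cos_zero] at h
      have h2 : |(0:ℝ) - 2*Real.pi*Int.fract ((m:ℝ)*θ)| = 2*Real.pi*Int.fract ((m:ℝ)*θ) := by
        rw [zero_sub, abs_neg, abs_of_nonneg (by positivity)]
      rw [h2] at h
      calc 1 - Real.cos (2*Real.pi*Int.fract ((m:ℝ)*θ))
          ≤ |1 - Real.cos (2*Real.pi*Int.fract ((m:ℝ)*θ))| := le_abs_self _
        _ ≤ 2*Real.pi*Int.fract ((m:ℝ)*θ) := h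
    have hsq : ‖(1 : ℂ) - Complex.exp ((φ:ℂ) * Complex.I)‖^2 ≤ 4*Real.pi*((2:ℝ)⁻¹)^m := by
      rw [hnormsq, hcosper]
      have h3 : Int.fract ((m:ℝ)*θ) ≤ ((2:ℝ)⁻¹)^m := by
        rw [inv_pow]
        exact hfr
      nlinarith [Real.pi_pos, hcosb, h3, Real.pi_pos.le]
    have hnn : (0:ℝ) ≤ ‖(1 : ℂ) - Complex.exp ((φ:ℂ) * Complex.I)‖ := norm_nonneg _
    have h5 : ‖(1 : ℂ) - Complex.exp ((φ:ℂ) * Complex.I)‖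
        = Real.sqrt (‖(1 : ℂ) - Complex.exp ((φ:ℂ) * Complex.I)‖^2) :=
      (Real.sqrt_sq hnn).symm
    rw [h5]
    calc Real.sqrt (‖(1 : ℂ) - Complex.exp ((φ:ℂ) * Complex.I)‖^2)
        ≤ Real.sqrt (4*Real.pi*((2:ℝ)⁻¹)^m) := Real.sqrt_le_sqrt hsq
      _ = Real.sqrt (4*Real.pi) * (Real.sqrt 2⁻¹)^m := by
          rw [Real.sqrt_mul (by positivity), sqrt_pow' _ (by norm_num)]
  -- combine
  have hc2 : |2/(k:ℝ)^2| ≤ 2 := by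
    have hk1 : (1:ℝ) ≤ (k:ℝ)^2 := by
      have : (1:ℝ) ≤ (k:ℝ) := by exact_mod_cast hk
      nlinarith
    rw [abs_of_nonneg (by positivity), div_le_iff₀ (by positivity)]
    nlinarith
  unfold cTermF
  rw [norm_mul, norm_mul]
  rw [Complex.norm_real, Real.norm_eq_abs]
  calc |2/(k:ℝ)^2| * (‖(1 : ℂ) - Complex.exp (2 * Real.pi * Complex.I * (m : ℂ) * (θ : ℂ))‖ *
        ‖Complex.exp (2 * Real.pi * Complex.I * (m : ℂ) * z)‖)
      ≤ 2 * ((Real.sqrt (4*Real.pi) * (Real.sqrt 2⁻¹)^m) * (Real.exp (Real.pi/20)^m)) := by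
        apply mul_le_mul hc2 _ (by positivity) (by norm_num)
        exact mul_le_mul hcoef hexp (norm_nonneg _) (by positivity)
    _ = 2 * Real.sqrt (4*Real.pi) * (Real.sqrt 2⁻¹ * Real.exp (Real.pi/20))^m := by
        rw [mul_pow]
        ring

lemma f_contDiff_top (θ : ℝ) (n : ℕ → ℕ)
    (hgrowth : ∀ k : ℕ, 1 ≤ k → 2 ^ k ≤ n k)
    (hfract : ∀ k : ℕ, 1 ≤ k → Int.fract ((n k : ℝ) * θ) ≤ ((2 : ℝ) ^ n k)⁻¹)
    (f : ℝ → ℝ) (hf : ∀ t : ℝ, f t = ∑' k : ℕ, furstTermF θ n (k + 1) t) :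
    ContDiff ℝ (⊤ : ℕ∞) f := by
  set ρ : ℝ := Real.sqrt 2⁻¹ * Real.exp (Real.pi/20) with hρ
  have hρ0 : 0 ≤ ρ := by rw [hρ]; positivity
  have hρ1 : ρ < 1 := ratio_lt_one
  set S : Set ℂ := {z | |z.im| < 1/40} with hS
  have hSopen : IsOpen S := by
    have he : S = (fun z : ℂ => |z.im|) ⁻¹' (Set.Iio (1/40)) := rfl
    rw [he]
    exact (continuous_abs.comp Complex.continuous_im).isOpen_preimage _ isOpen_Iio
  set u : ℕ → ℝ := fun k => 2 * Real.sqrt (4*Real.pi) * ρ^(k+1) with hu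
  have husum : Summable u := by
    rw [hu]
    exact ((summable_nat_add_iff 1).mpr (summable_geometric_of_lt_one hρ0 hρ1)).mul_left _
  have hbound : ∀ (k:ℕ) (z:ℂ), z ∈ S → ‖cTermF θ n (k+1) z‖ ≤ u k := by
    intro k z hz
    have hzim : |z.im| ≤ 1/40 := le_of_lt hz
    have h1 := cTermF_bound θ n (k+1) (by omega) (hfract (k+1) (by omega)) z hzim
    have hkn : k+1 ≤ n (k+1) :=
      le_trans (Nat.le_of_lt (Nat.lt_two_pow_self (n := k+1))) (hgrowth (k+1) (by omega))
    have h3 : ρ^(n (k+1)) ≤ ρ^(k+1) := pow_le_pow_of_le_one hρ0 (le_of_lt hρ1) hkn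
    calc ‖cTermF θ n (k+1) z‖ ≤ 2 * Real.sqrt (4*Real.pi) * ρ^(n (k+1)) := h1
      _ ≤ 2 * Real.sqrt (4*Real.pi) * ρ^(k+1) :=
          mul_le_mul_of_nonneg_left h3 (by positivity)
      _ = u k := rfl
  set F' : ℂ → ℂ := fun z => ∑' k, cTermF θ n (k+1) z with hF'
  have hTU : TendstoUniformlyOn (fun N z => ∑ k ∈ Finset.range N, cTermF θ n (k+1) z)
      F' atTop S := tendstoUniformlyOn_tsum_nat husum hbound
  have hdiff : DifferentiableOn ℂ F' S := by
    apply hTU.tendstoLocallyUniformlyOn.differentiableOn ?_ hSopen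
    apply Filter.Eventually.of_forall
    intro N
    apply Differentiable.differentiableOn
    apply Differentiable.fun_sum
    intro j _
    exact cTermF_diff θ n (j+1)
  have hAnhd : AnalyticOnNhd ℂ F' S := hdiff.analyticOnNhd hSopen
  have hmaps : ∀ t : ℝ, ((t:ℂ)) ∈ S := by
    intro t
    rw [hS]
    simp only [Set.mem_setOf_eq, Complex.ofReal_im, abs_zero]
    norm_num
  have hsumm : ∀ t : ℝ, Summable (fun k => cTermF θ n (k+1) (t:ℂ)) := fun t =>
    Summable.of_norm_bounded husum (fun k => hbound k _ (hmaps t))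
  have hfeq : f = fun t : ℝ => (F' (t:ℂ)).re := by
    funext t
    rw [hf t, tsum_congr (fun k => termF_re θ n (k+1) t)]
    exact (Complex.re_tsum (hsumm t)).symm
  rw [hfeq]
  have h1 : AnalyticOnNhd ℝ F' S := hAnhd.restrictScalars
  have h2 : AnalyticOnNhd ℝ (fun t : ℝ => (t:ℂ)) Set.univ :=
    Complex.ofRealCLM.analyticOnNhd Set.univ
  have h3 : AnalyticOnNhd ℝ (fun t : ℝ => F' (t:ℂ)) Set.univ :=
    h1.comp h2 (fun t _ => hmaps t)
  have h4 : AnalyticOnNhd ℝ (fun t : ℝ => (F' (t:ℂ)).re) Set.univ :=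
    (Complex.reCLM.analyticOnNhd Set.univ).comp h3 (Set.mapsTo_univ _ _)
  exact h4.contDiff

theorem furstenberg_example
    (θ : ℝ) (hθ : Irrational θ) (n : ℕ → ℕ)
    (hgrowth : ∀ k : ℕ, 1 ≤ k → 2 ^ k ≤ n k)
    (hfract : ∀ k : ℕ, 1 ≤ k →
      0 < Int.fract ((n k : ℝ) * θ) ∧ Int.fract ((n k : ℝ) * θ) ≤ ((2 : ℝ) ^ n k)⁻¹)
    (f g : ℝ → ℝ)
    (hf : ∀ t : ℝ, f t = ∑' k : ℕ, furstTermF θ n (k + 1) t)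
    (hg : ∀ t : ℝ, g t = ∑' k : ℕ, furstTermG n (k + 1) t) :
    TendstoUniformly (fun N t => ∑ k ∈ Finset.range N, furstTermF θ n (k + 1) t) f atTop ∧
    TendstoUniformly (fun N t => ∑ k ∈ Finset.range N, furstTermG n (k + 1) t) g atTop ∧
    Function.Periodic f 1 ∧ Function.Periodic g 1 ∧
    ContDiff ℝ (⊤ : ℕ∞) f ∧ (∫ t in (0:ℝ)..1, f t) = 0 ∧
    Continuous g ∧ ¬ ContDiff ℝ 1 g ∧
    ∀ t : ℝ, g t - g (t + θ) = f t := by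
  have hsum4 : Summable (fun k : ℕ => 4/((k:ℝ)+1)^2) := summable_inv_sq 4
  have hsum2 : Summable (fun k : ℕ => 2/((k:ℝ)+1)^2) := summable_inv_sq 2
  have hn1 : ∀ k : ℕ, 1 ≤ n (k+1) :=
    fun k => le_trans Nat.one_le_two_pow (hgrowth (k+1) (by omega))
  have hFb : ∀ (k:ℕ) (t:ℝ), ‖furstTermF θ n (k+1) t‖ ≤ 4/((k:ℝ)+1)^2 := by
    intro k t
    rw [Real.norm_eq_abs]
    have h := absF θ n (k+1) t
    push_cast at h
    exact h
  have hGb : ∀ (k:ℕ) (t:ℝ), ‖furstTermG n (k+1) t‖ ≤ 2/((k:ℝ)+1)^2 := by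
    intro k t
    rw [Real.norm_eq_abs]
    have h := absG n (k+1) t
    push_cast at h
    exact h
  have hfe : f = fun t => ∑' k, furstTermF θ n (k+1) t := funext hf
  have hge : g = fun t => ∑' k, furstTermG n (k+1) t := funext hg
  have hFU : TendstoUniformly (fun N t => ∑ k ∈ Finset.range N, furstTermF θ n (k + 1) t)
      f atTop := by
    rw [hfe]; exact tendstoUniformly_tsum_nat hsum4 hFb
  have hGU : TendstoUniformly (fun N t => ∑ k ∈ Finset.range N, furstTermG n (k + 1) t)
      g atTop := by
    rw [hge]; exact tendstoUniformly_tsum_nat hsum2 hGb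
  have hGc : ∀ k : ℕ, Continuous (fun t => furstTermG n k t) := by
    intro k; unfold furstTermG; fun_prop
  have hgC : Continuous g :=
    hGU.continuous (Filter.Eventually.of_forall fun N =>
      continuous_finset_sum _ fun k _ => hGc (k+1)).frequently
  refine ⟨hFU, hGU, ?_, ?_, ?_, ?_, hgC, ?_, ?_⟩
  · intro t; rw [hf, hf]; exact tsum_congr (fun k => periodF θ n (k+1) t)
  · intro t; rw [hg, hg]; exact tsum_congr (fun k => periodG n (k+1) t)
  · exact f_contDiff_top θ n hgrowth (fun k hk => (hfract k hk).2) f hf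
  · -- integral of f is zero
    have hswap := swap_int (fun k t => furstTermF θ n (k+1) t)
      (fun k => (termF_contDiff θ n (k+1)).continuous) (fun k => 4/((k:ℝ)+1)^2) hFb hsum4
    have h1 : (∫ t in (0:ℝ)..1, f t) = ∫ t in (0:ℝ)..1, ∑' k, furstTermF θ n (k+1) t :=
      intervalIntegral.integral_congr (fun t _ => hf t)
    rw [h1, ← hswap]
    have h2 : ∀ k : ℕ, (∫ t in (0:ℝ)..1, furstTermF θ n (k+1) t) = 0 :=
      fun k => int_termF θ n (k+1) (hn1 k)
    rw [tsum_congr h2, tsum_zero]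
  · -- g is not C¹
    intro hC1
    -- lower bound: Fourier-type coefficient
    have keyA : ∀ k : ℕ, 1 ≤ k →
        1/(k:ℝ)^2 ≤ ∫ t in (0:ℝ)..1, g t * Real.cos (2*Real.pi*(n k : ℝ)*t) := by
      intro k hk
      have hNk : 1 ≤ n k := le_trans Nat.one_le_two_pow (hgrowth k hk)
      set F : ℕ → ℝ → ℝ :=
        fun j t => furstTermG n (j+1) t * Real.cos (2*Real.pi*(n k : ℝ)*t) with hFdef
      have hFc : ∀ j, Continuous (F j) := by
        intro j; rw [hFdef]; exact (hGc (j+1)).mul (by fun_prop)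
      have hFb2 : ∀ j t, ‖F j t‖ ≤ 2/((j:ℝ)+1)^2 := by
        intro j t
        rw [hFdef]
        calc ‖furstTermG n (j+1) t * Real.cos (2*Real.pi*(n k : ℝ)*t)‖
            = ‖furstTermG n (j+1) t‖ * |Real.cos (2*Real.pi*(n k : ℝ)*t)| := by
              rw [norm_mul, Real.norm_eq_abs, Real.norm_eq_abs]
          _ ≤ (2/((j:ℝ)+1)^2) * 1 :=
              mul_le_mul (hGb j t) (Real.abs_cos_le_one _) (abs_nonneg _)
                (le_trans (norm_nonneg _) (hGb j t))
          _ = 2/((j:ℝ)+1)^2 := by ring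
      have hswap := swap_int F hFc (fun j => 2/((j:ℝ)+1)^2) hFb2 hsum2
      have hpt : ∀ t ∈ Set.uIcc (0:ℝ) 1, (∑' j, F j t) = g t * Real.cos (2*Real.pi*(n k:ℝ)*t) := by
        intro t _
        rw [hFdef, tsum_mul_right, ← hg t]
      have hval : ∀ j : ℕ, (∫ t in (0:ℝ)..1, F j t)
          = 2/(((j+1):ℕ):ℝ)^2 * (if n (j+1) = n k then 1/2 else 0) := by
        intro j
        have he : ∀ t ∈ Set.uIcc (0:ℝ) 1, F j t = (2/(((j+1):ℕ):ℝ)^2) *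
            (Real.cos (2*Real.pi*(n (j+1) : ℝ)*t) * Real.cos (2*Real.pi*(n k : ℝ)*t)) := by
          intro t _
          rw [hFdef]
          unfold furstTermG
          ring
        rw [intervalIntegral.integral_congr he, intervalIntegral.integral_const_mul]
        congr 1
        exact orth (n (j+1)) (n k) (hn1 j) hNk
      have hnonneg : ∀ j : ℕ, 0 ≤ ∫ t in (0:ℝ)..1, F j t := by
        intro j
        rw [hval j]
        split_ifs <;> positivity
      have hsummable_val : Summable (fun j => ∫ t in (0:ℝ)..1, F j t) := by
        apply Summable.of_nonneg_of_le hnonneg (fun j => ?_) hsum2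
        rw [hval j]
        push_cast
        split_ifs
        · have h0 : (0:ℝ) ≤ 1/((j:ℝ)+1)^2 := by positivity
          have e1 : 2/((j:ℝ)+1)^2 * ((1:ℝ)/2) = 1/((j:ℝ)+1)^2 := by ring
          have e2 : 2/((j:ℝ)+1)^2 = 2*(1/((j:ℝ)+1)^2) := by ring
          rw [e1, e2]; linarith
        · simp only [mul_zero]
          positivity
      have hle := Summable.le_tsum hsummable_val (k-1) (fun j _ => hnonneg j)
      have hk1 : (k-1)+1 = k := Nat.succ_pred_eq_of_pos hk
      rw [hval (k-1), hk1, if_pos rfl] at hle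
      have hcast : 2/((k:ℕ):ℝ)^2 * ((1:ℝ)/2) = 1/(k:ℝ)^2 := by
        push_cast; ring
      rw [hcast] at hle
      calc 1/(k:ℝ)^2 ≤ ∑' j, ∫ t in (0:ℝ)..1, F j t := hle
        _ = ∫ t in (0:ℝ)..1, ∑' j, F j t := hswap
        _ = ∫ t in (0:ℝ)..1, g t * Real.cos (2*Real.pi*(n k:ℝ)*t) :=
            intervalIntegral.integral_congr hpt
    -- upper bound via integration by parts
    have hgP : Function.Periodic g 1 := by
      intro t; rw [hg, hg]; exact tsum_congr (fun j => periodG n (j+1) t)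
    have hderiv_cont : Continuous (deriv g) := hC1.continuous_deriv le_rfl
    obtain ⟨M, hM⟩ := (isCompact_Icc (a := (0:ℝ)) (b := 1)).exists_bound_of_continuousOn
      hderiv_cont.continuousOn
    have hM0 : 0 ≤ M := le_trans (norm_nonneg _) (hM 0 (by norm_num))
    have keyB : ∀ N : ℕ, 1 ≤ N →
        |∫ t in (0:ℝ)..1, g t * Real.cos (2*Real.pi*(N:ℝ)*t)| ≤ M * (2*Real.pi*(N:ℝ))⁻¹ := by
      intro N hN
      have hNpos : (0:ℝ) < (N:ℝ) := by exact_mod_cast hN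
      have hBpos : (0:ℝ) < 2*Real.pi*(N:ℝ) := by positivity
      have hBne : 2*Real.pi*(N:ℝ) ≠ 0 := ne_of_gt hBpos
      set v : ℝ → ℝ := fun t => (2*Real.pi*(N:ℝ))⁻¹ * Real.sin (2*Real.pi*(N:ℝ)*t) with hvdef
      have hv : ∀ x ∈ Set.uIcc (0:ℝ) 1, HasDerivAt v (Real.cos (2*Real.pi*(N:ℝ)*x)) x := by
        intro x _
        have h0 : HasDerivAt (fun t : ℝ => 2*Real.pi*(N:ℝ)*t) (2*Real.pi*(N:ℝ)*1) x :=
          (hasDerivAt_id x).const_mul _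
        have h1 := (h0.sin).const_mul ((2*Real.pi*(N:ℝ))⁻¹)
        rw [hvdef]
        exact h1.congr_deriv (by
          rw [mul_one, mul_comm (Real.cos _), ← mul_assoc, inv_mul_cancel₀ hBne, one_mul])
        try ring
      have hu : ∀ x ∈ Set.uIcc (0:ℝ) 1, HasDerivAt g (deriv g x) x := fun x _ =>
        ((hC1.differentiable one_ne_zero) x).hasDerivAt
      have hu' : IntervalIntegrable (deriv g) MeasureTheory.volume 0 1 :=
        hderiv_cont.intervalIntegrable 0 1
      have hv' : IntervalIntegrable (fun t => Real.cos (2*Real.pi*(N:ℝ)*t))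
          MeasureTheory.volume 0 1 := by
        apply Continuous.intervalIntegrable; fun_prop
      have hparts := intervalIntegral.integral_mul_deriv_eq_deriv_mul hu hv hu' hv'
      have hv1 : v 1 = 0 := by
        rw [hvdef]
        simp only [mul_one]
        rw [sin_two_pi_nat N, mul_zero]
      have hv0 : v 0 = 0 := by rw [hvdef]; simp
      rw [hv1, hv0, mul_zero, mul_zero, sub_zero, zero_sub] at hparts
      rw [hparts, abs_neg]
      have hbound : ∀ x ∈ Set.uIoc (0:ℝ) 1, ‖deriv g x * v x‖ ≤ M * (2*Real.pi*(N:ℝ))⁻¹ := by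
        intro x hx
        have hxI : x ∈ Set.Icc (0:ℝ) 1 := by
          rw [Set.uIoc_of_le zero_le_one] at hx
          exact ⟨le_of_lt hx.1, hx.2⟩
        rw [norm_mul]
        have h2 : ‖v x‖ ≤ (2*Real.pi*(N:ℝ))⁻¹ := by
          rw [hvdef]
          simp only [norm_mul, Real.norm_eq_abs]
          rw [abs_of_nonneg (le_of_lt (inv_pos.mpr hBpos))]
          calc (2*Real.pi*(N:ℝ))⁻¹ * |Real.sin (2*Real.pi*(N:ℝ)*x)|
              ≤ (2*Real.pi*(N:ℝ))⁻¹ * 1 :=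
                mul_le_mul_of_nonneg_left (Real.abs_sin_le_one _) (le_of_lt (inv_pos.mpr hBpos))
            _ = (2*Real.pi*(N:ℝ))⁻¹ := by ring
        exact mul_le_mul (hM x hxI) h2 (norm_nonneg _) hM0
      calc |∫ x in (0:ℝ)..1, deriv g x * v x|
          ≤ M * (2*Real.pi*(N:ℝ))⁻¹ * |1 - 0| :=
            intervalIntegral.norm_integral_le_of_norm_le_const hbound
        _ = M * (2*Real.pi*(N:ℝ))⁻¹ := by norm_num
    -- contradiction
    have hcontr : ∀ k : ℕ, 1 ≤ k → 2*Real.pi*(2:ℝ)^k ≤ M * (k:ℝ)^2 := by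
      intro k hk
      have hA := keyA k hk
      have hB := keyB (n k) (le_trans Nat.one_le_two_pow (hgrowth k hk))
      have hkpos : (0:ℝ) < (k:ℝ) := by exact_mod_cast hk
      have hnpos : (0:ℝ) < (n k : ℝ) := by
        exact_mod_cast le_trans Nat.one_le_two_pow (hgrowth k hk)
      have hBpos : (0:ℝ) < 2*Real.pi*(n k : ℝ) := by positivity
      have h1 : 1/(k:ℝ)^2 ≤ M * (2*Real.pi*(n k:ℝ))⁻¹ :=
        le_trans (le_trans hA (le_abs_self _)) hB
      have h2 : 2*Real.pi*(n k:ℝ) ≤ M * (k:ℝ)^2 := by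
        have hh := mul_le_mul_of_nonneg_right h1
          (le_of_lt (mul_pos (show (0:ℝ) < (k:ℝ)^2 by positivity) hBpos))
        have e1 : 1/(k:ℝ)^2 * ((k:ℝ)^2 * (2*Real.pi*(n k:ℝ))) = 2*Real.pi*(n k:ℝ) := by
          field_simp
        have e2 : (M * (2*Real.pi*(n k:ℝ))⁻¹) * ((k:ℝ)^2 * (2*Real.pi*(n k:ℝ)))
            = M * (k:ℝ)^2 := by
          field_simp
        rw [e1, e2] at hh
        exact hh
      have h3 : (2:ℝ)^k ≤ (n k : ℝ) := by
        have := hgrowth k hk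
        exact_mod_cast this
      nlinarith [Real.pi_pos]
    have htend : Filter.Tendsto (fun k : ℕ => (k:ℝ)^2 * (1/2:ℝ)^k) atTop (nhds 0) :=
      (summable_pow_mul_geometric_of_norm_lt_one 2 (r := (1/2:ℝ))
        (by rw [Real.norm_eq_abs, abs_of_nonneg (by norm_num : (0:ℝ) ≤ 1/2)]; norm_num)).tendsto_atTop_zero
    have hMpos : (0:ℝ) < M + 1 := by linarith
    have hev := (htend.eventually_lt_const
      (show (0:ℝ) < 2*Real.pi/(M+1) by positivity)).and (eventually_ge_atTop 1)
    obtain ⟨k, hlt, hk1⟩ := hev.exists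
    have hc := hcontr k hk1
    have hpow : (0:ℝ) < (1/2:ℝ)^k := by positivity
    have hmul : (1/2:ℝ)^k * (2:ℝ)^k = 1 := by
      rw [← mul_pow]; norm_num
    have h5 : 2*Real.pi ≤ (M+1) * ((k:ℝ)^2 * (1/2:ℝ)^k) := by
      have e : 2*Real.pi*(2:ℝ)^k*(1/2:ℝ)^k = 2*Real.pi := by
        rw [mul_assoc, show (2:ℝ)^k*(1/2:ℝ)^k = 1 by rw [← mul_pow]; norm_num, mul_one]
      have h8 := mul_le_mul_of_nonneg_right hc (le_of_lt hpow)
      rw [e] at h8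
      have h7 : (0:ℝ) ≤ (k:ℝ)^2*(1/2:ℝ)^k := by positivity
      nlinarith [h8, h7]
    have h6 : (M+1) * ((k:ℝ)^2 * (1/2:ℝ)^k) < (M+1) * (2*Real.pi/(M+1)) :=
      mul_lt_mul_of_pos_left hlt hMpos
    rw [mul_div_cancel₀ _ (ne_of_gt hMpos)] at h6
    linarith
  · -- g t - g (t+θ) = f t
    intro t
    have hs1 : Summable (fun k => furstTermG n (k+1) t) :=
      Summable.of_norm_bounded hsum2 (fun k => hGb k t)
    have hs2 : Summable (fun k => furstTermG n (k+1) (t+θ)) :=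
      Summable.of_norm_bounded hsum2 (fun k => hGb k (t+θ))
    rw [hf, hg, hg, ← Summable.tsum_sub hs1 hs2]
    exact tsum_congr fun k => (furstTermF_eq θ n (k+1) t).symm
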